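/- For every positive integer n and every σ > 0, ∫_0^∞ f_{χ²}(x;n) · Q(√x/(2σ)) dx ≤ (1 + 1/(4σ²))^{−n/2} = 2^{−n·(1/2)·log₂(1 + SNR₂/4)} where SNR₂ = 1/σ². Hence, for Gaussian channel inputs X_i i.i.d. N(0,1) (so that ∑_{i=1}^n X_i² is chi-squared with n degrees of freedom), the detection error probability ε_n = E[Q(√(∑ X_i²)/(2σ))] satisfies ε_n ≤ 2^{−n·(1/2)·log₂(1 + SNR₂/4)}, establishing the communication-optimal detection error exponent E_c = (1/2)·log₂(1 + SNR₂/4). -/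

import Mathlib

open Real MeasureTheory

/-- The Gaussian Q-function: upper-tail probability of the standard normal distribution. -/
noncomputable def gaussQ (x : ℝ) : ℝ :=
  ∫ t in Set.Ioi x, (Real.sqrt (2 * Real.pi))⁻¹ * Real.exp (-t ^ 2 / 2)

/-- The chi-squared density with `m` degrees of freedom. -/
noncomputable def chiSqPDF (m x : ℝ) : ℝ :=
  if 0 < x then x ^ (m / 2 - 1) * Real.exp (-x / 2) / (2 ^ (m / 2) * Real.Gamma (m / 2))
  else 0

lemma gauss_integral : ∫ t : ℝ, Real.exp (-t ^ 2 / 2) = Real.sqrt (2 * Real.pi) := by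
  have h : (fun t : ℝ => Real.exp (-t ^ 2 / 2))
      = fun t : ℝ => Real.exp (-(1/2 : ℝ) * t ^ 2) := by
    funext t; congr 1; ring
  rw [h, integral_gaussian, show Real.pi / (1/2) = 2 * Real.pi by ring]

lemma gaussQ_le {y : ℝ} (hy : 0 ≤ y) : gaussQ y ≤ Real.exp (-y ^ 2 / 2) := by
  have hbase : Integrable (fun t : ℝ => Real.exp (-(1/2 : ℝ) * t ^ 2)) :=
    integrable_exp_neg_mul_sq (by norm_num)
  have hφ : Integrable (fun t : ℝ => (Real.sqrt (2 * Real.pi))⁻¹ * Real.exp (-t ^ 2 / 2)) := by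
    have key : (fun t : ℝ => (Real.sqrt (2 * Real.pi))⁻¹ * Real.exp (-t ^ 2 / 2))
        = fun t : ℝ => (Real.sqrt (2 * Real.pi))⁻¹ * Real.exp (-(1/2 : ℝ) * t ^ 2) := by
      funext t; rw [show -t ^ 2 / 2 = -(1/2 : ℝ) * t ^ 2 from by ring]
    rw [key]
    exact hbase.const_mul _
  have hint : Integrable (fun t : ℝ => (Real.sqrt (2 * Real.pi))⁻¹ *
      Real.exp (-(t - y) ^ 2 / 2)) := by
    have key : (fun t : ℝ => (Real.sqrt (2 * Real.pi))⁻¹ * Real.exp (-(t - y) ^ 2 / 2))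
        = fun t : ℝ => (Real.sqrt (2 * Real.pi))⁻¹
            * ((fun s : ℝ => Real.exp (-(1/2 : ℝ) * s ^ 2)) (t - y)) := by
      funext t; rw [show -(t - y) ^ 2 / 2 = -(1/2 : ℝ) * (t - y) ^ 2 from by ring]
    rw [key]
    exact (hbase.comp_sub_right y).const_mul _
  have hstep : gaussQ y ≤ ∫ t in Set.Ioi y,
      Real.exp (-y ^ 2 / 2) * ((Real.sqrt (2 * Real.pi))⁻¹ * Real.exp (-(t - y) ^ 2 / 2)) := by
    refine setIntegral_mono_on hφ.integrableOn ((hint.const_mul _).integrableOn)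
      measurableSet_Ioi ?_
    intro t ht
    rw [show Real.exp (-y ^ 2 / 2) * ((Real.sqrt (2 * Real.pi))⁻¹ * Real.exp (-(t - y) ^ 2 / 2))
        = (Real.sqrt (2 * Real.pi))⁻¹ * (Real.exp (-y ^ 2 / 2) * Real.exp (-(t - y) ^ 2 / 2))
        from by ring, ← Real.exp_add]
    gcongr
    nlinarith [Set.mem_Ioi.1 ht, hy]
  refine hstep.trans ?_
  rw [integral_const_mul]
  have h2 : ∫ t in Set.Ioi y, (Real.sqrt (2 * Real.pi))⁻¹ * Real.exp (-(t - y) ^ 2 / 2) ≤ 1 := by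
    have h3 := setIntegral_le_integral (s := Set.Ioi y) hint
      (Filter.Eventually.of_forall fun t => by positivity)
    refine h3.trans ?_
    rw [integral_const_mul, integral_sub_right_eq_self (fun t : ℝ => Real.exp (-t ^ 2 / 2)) y,
      gauss_integral, inv_mul_cancel₀]
    positivity
  calc Real.exp (-y ^ 2 / 2) * ∫ t in Set.Ioi y,
        (Real.sqrt (2 * Real.pi))⁻¹ * Real.exp (-(t - y) ^ 2 / 2)
      ≤ Real.exp (-y ^ 2 / 2) * 1 := mul_le_mul_of_nonneg_left h2 (Real.exp_pos _).le
    _ = Real.exp (-y ^ 2 / 2) := mul_one _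

lemma gaussQ_nonneg (y : ℝ) : 0 ≤ gaussQ y :=
  integral_nonneg fun t => by positivity

/-- Communication-optimal detection error bound: for Gaussian channel inputs (so that the
transmitted power is chi-squared with `n` degrees of freedom), the detection error probability
`ε_n = ∫_0^∞ f_{χ²}(x;n)·Q(√x/(2σ)) dx` satisfies
`ε_n ≤ (1+1/(4σ²))^{−n/2} = 2^{−n·(1/2)·log₂(1+SNR₂/4)}` with `SNR₂ = 1/σ²`. -/
theorem chiSq_detection_error_bound (n : ℕ) (hn : 0 < n) (σ : ℝ) (hσ : 0 < σ) :
    (∫ x in Set.Ioi (0 : ℝ), chiSqPDF n x * gaussQ (Real.sqrt x / (2 * σ)))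
        ≤ (1 + 1 / (4 * σ ^ 2)) ^ (-(n : ℝ) / 2) ∧
      (1 + 1 / (4 * σ ^ 2)) ^ (-(n : ℝ) / 2)
        = 2 ^ (-(n : ℝ) * (1 / 2 * Real.logb 2 (1 + (1 / σ ^ 2) / 4))) := by
  have hσ' : σ ≠ 0 := hσ.ne'
  set a : ℝ := (n : ℝ) / 2 with ha_def
  have ha : 0 < a := by positivity
  set b : ℝ := 1/2 + 1/(8 * σ ^ 2) with hb_def
  have hb : 0 < b := by positivity
  have hΓ : 0 < Real.Gamma a := Real.Gamma_pos_of_pos ha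
  constructor
  · -- main inequality
    have hgi : IntegrableOn
        (fun x : ℝ => x ^ (a - 1) * Real.exp (-(b * x)) / (2 ^ a * Real.Gamma a))
        (Set.Ioi 0) := by
      have h1 := integrableOn_rpow_mul_exp_neg_mul_rpow (p := 1) (s := a - 1) (b := b)
        (by simp only [ha_def]; nlinarith [Nat.one_le_cast (α := ℝ) |>.2 hn])
        one_pos hb
      simp only [Real.rpow_one, neg_mul] at h1
      exact h1.div_const _
    have hmono : (∫ x in Set.Ioi (0 : ℝ), chiSqPDF n x * gaussQ (Real.sqrt x / (2 * σ)))
        ≤ ∫ x in Set.Ioi (0 : ℝ),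
            x ^ (a - 1) * Real.exp (-(b * x)) / (2 ^ a * Real.Gamma a) := by
      refine integral_mono_of_nonneg ?_ hgi ?_
      · refine (ae_restrict_iff' measurableSet_Ioi).2 (Filter.Eventually.of_forall ?_)
        intro x hx
        have hx0 : (0:ℝ) < x := hx
        have : 0 ≤ chiSqPDF n x := by
          unfold chiSqPDF
          rw [if_pos (Set.mem_Ioi.1 hx)]
          positivity
        exact mul_nonneg this (gaussQ_nonneg _)
      · refine (ae_restrict_iff' measurableSet_Ioi).2 (Filter.Eventually.of_forall ?_)
        intro x hx
        have hx0 : (0:ℝ) < x := hx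
        have hQ : gaussQ (Real.sqrt x / (2 * σ)) ≤ Real.exp (-(x / (8 * σ ^ 2))) := by
          have h := gaussQ_le (y := Real.sqrt x / (2 * σ)) (by positivity)
          refine h.trans_eq ?_
          rw [div_pow, Real.sq_sqrt hx0.le, mul_pow]
          congr 1
          field_simp
          ring
        have hchi : chiSqPDF n x = x ^ (a - 1) * Real.exp (-x / 2) / (2 ^ a * Real.Gamma a) := by
          unfold chiSqPDF
          rw [if_pos hx0]
        calc chiSqPDF n x * gaussQ (Real.sqrt x / (2 * σ))
            ≤ chiSqPDF n x * Real.exp (-(x / (8 * σ ^ 2))) := by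
              refine mul_le_mul_of_nonneg_left hQ ?_
              rw [hchi]; positivity
          _ = x ^ (a - 1) * Real.exp (-(b * x)) / (2 ^ a * Real.Gamma a) := by
              rw [hchi, div_mul_eq_mul_div, mul_assoc, ← Real.exp_add]
              congr 2
              rw [hb_def]
              field_simp
              ring
    refine hmono.trans ?_
    rw [integral_div, integral_rpow_mul_exp_neg_mul_Ioi ha hb]
    have key : (1 / b) ^ a * Real.Gamma a / (2 ^ a * Real.Gamma a)
        = (1 + 1 / (4 * σ ^ 2)) ^ (-(n : ℝ) / 2) := by
      have h2b : 1 + 1 / (4 * σ ^ 2) = 2 * b := by rw [hb_def]; field_simp; ring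
      rw [h2b, show -(n : ℝ) / 2 = -a from by rw [ha_def]; ring,
        Real.rpow_neg (by positivity), Real.mul_rpow (by norm_num) hb.le,
        one_div, Real.inv_rpow hb.le]
      rw [mul_comm ((2:ℝ) ^ a) (Real.Gamma a), ← div_div, mul_div_assoc,
        div_self hΓ.ne', mul_one, mul_inv, div_eq_mul_inv, mul_comm]
    exact key.le
  · have hA : (0:ℝ) < 1 + 1/(4*σ^2) := by positivity
    rw [show 1 + (1/σ^2)/4 = 1 + 1/(4*σ^2) from by ring,
      show -(n:ℝ) * (1/2 * Real.logb 2 (1 + 1/(4*σ^2)))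
          = Real.logb 2 (1 + 1/(4*σ^2)) * (-(n:ℝ)/2) from by ring,
      Real.rpow_mul (by norm_num : (0:ℝ) ≤ 2),
      Real.rpow_logb (by norm_num) (by norm_num) hA]
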